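/- arXiv:math/0508427 — 4 statements merged into one kernel-verified Lean document; each statement's English description precedes it below -/
import Mathlib

section
/- Let p be an odd integer, n > c_1 * log_2 p with c_1 > 1 constant, and let X_{n+1} = 2 X_n + b_n mod p with X_0 = 0 where b_n are i.i.d. with P(b_n = 1) = a, P(b_n = 0) = 1/2, P(b_n = -1) = c, a + c = 1/2. Then the total variation distance of the distribution P_n of X_n from uniform on Z/pZ is at most 1/p^{c_1 - 1}. -/
private def Dker (p : ℕ) (a c : ℝ) : ZMod p → ℝ :=
  fun x => (if x = 0 then 2*a else 0) + (if x = -1 then 2*c else 0)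

private def Bker (p : ℕ) [NeZero p] (a c : ℝ) : ℕ → ZMod p → ℝ
  | 0 => fun x => if x = 0 then 1 else 0
  | n+1 => fun x => ∑ z : ZMod p, Bker p a c n z * Dker p a c (x - 2*z)

private lemma div_count_iff (p M q r : ℕ) (hp : 0 < p) (hr : r < p) :
    q < (M + p - 1 - r) / p ↔ q * p + r < M := by
  rw [Nat.lt_iff_add_one_le, Nat.le_div_iff_mul_le hp, add_one_mul]
  suffices h : ∀ t, (t + p ≤ M + p - 1 - r ↔ t + r < M) from h (q*p)
  intro t; omega

private lemma count_card (p M r : ℕ) (hp : 0 < p) (hr : r < p) :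
    ((Finset.range M).filter (fun j => j % p = r)).card = (M + p - 1 - r) / p := by
  have himg : (Finset.range M).filter (fun j => j % p = r)
      = (Finset.range ((M + p - 1 - r)/p)).image (fun q => q * p + r) := by
    ext j
    simp only [Finset.mem_filter, Finset.mem_range, Finset.mem_image]
    constructor
    · rintro ⟨hjM, hjr⟩
      have hd : p * (j / p) + j % p = j := Nat.div_add_mod j p
      rw [hjr] at hd
      refine ⟨j / p, ?_, ?_⟩
      · rw [div_count_iff p M _ r hp hr, mul_comm, hd]; exact hjM
      · rw [mul_comm, hd]
    · rintro ⟨q, hq, rfl⟩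
      rw [div_count_iff p M q r hp hr] at hq
      exact ⟨hq, by rw [add_comm, Nat.add_mul_mod_self_right]; exact Nat.mod_eq_of_lt hr⟩
  rw [himg, Finset.card_image_of_injective _ ?_, Finset.card_range]
  intro q q' h
  simp only [] at h
  have : q * p = q' * p := by omega
  exact Nat.eq_of_mul_eq_mul_right hp this

private lemma count_bounds (p M r : ℕ) (hp : 0 < p) (hr : r < p) :
    ((Finset.range M).filter (fun j => j % p = r)).card * p ≤ M + p ∧
    M ≤ ((Finset.range M).filter (fun j => j % p = r)).card * p + p := by
  rw [count_card p M r hp hr]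
  have h1 : (M + p - 1 - r) / p * p ≤ M + p - 1 - r := Nat.div_mul_le_self _ _
  have h2 : M + p - 1 - r < (M + p - 1 - r) / p * p + p := by
    conv_lhs => rw [← Nat.div_add_mod' (M + p - 1 - r) p]
    exact Nat.add_lt_add_left (Nat.mod_lt _ hp) _
  suffices h : ∀ t, t ≤ M + p - 1 - r → M + p - 1 - r < t + p → (t ≤ M + p ∧ M ≤ t + p) from
    h _ h1 h2
  intro t ht1 ht2; omega

private lemma sum_range_double (f : ℕ → ℝ) (m : ℕ) :
    ∑ k ∈ Finset.range (2*m), f k = ∑ j ∈ Finset.range m, (f (2*j) + f (2*j+1)) := by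
  induction m with
  | zero => simp
  | succ m ih =>
    rw [Finset.sum_range_succ, ← ih, show 2*(m+1) = (2*m+1)+1 by ring,
      Finset.sum_range_succ, Finset.sum_range_succ]
    ring



/-- Case 1 of the main theorem, `b = 1/2`: if `n > c₁ log₂ p` with `c₁ > 1`,
then the distribution `P_n` of `X_n` (where `X_{n+1} = 2 X_n + b_n mod p`, `X_0 = 0`,
`P(b_n = 1) = a`, `P(b_n = 0) = 1/2`, `P(b_n = -1) = c`, `a + c = 1/2`) satisfies
`‖P_n - U‖ ≤ 1 / p^{c₁ - 1}`. -/
theorem chung_diaconis_graham_case1 (p : ℕ) [NeZero p] (hp : Odd p)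
    (a c : ℝ) (ha : 0 ≤ a) (hc : 0 ≤ c) (hac : a + c = 1/2)
    (P : ℕ → ZMod p → ℝ)
    (hP0 : ∀ x, P 0 x = if x = 0 then 1 else 0)
    (hPs : ∀ n x, P (n+1) x = ∑ y : ZMod p, P n y *
      (if x - 2*y = 1 then a else if x - 2*y = 0 then 1/2
        else if x - 2*y = -1 then c else 0))
    (c₁ : ℝ) (hc₁ : 1 < c₁) (n : ℕ) (hn : c₁ * Real.logb 2 p < n) :
    (1/2 : ℝ) * ∑ s : ZMod p, |P n s - 1 / p| ≤ 1 / (p : ℝ) ^ (c₁ - 1) := by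
  have hale : a ≤ 1 := by linarith
  by_cases hp1 : p = 1
  · subst hp1
    have hPn : ∀ m, 0 ≤ P m 0 ∧ P m 0 ≤ 1 := by
      intro m
      induction m with
      | zero => rw [hP0]; norm_num
      | succ m ih =>
        rw [hPs, Fintype.sum_unique]
        have h01 : ((0:ZMod 1) - 2*(default : ZMod 1) = 1) := Subsingleton.elim _ _
        have hd0 : (default : ZMod 1) = 0 := Subsingleton.elim _ _
        erw [hd0] at h01 ⊢
        rw [if_pos h01]
        constructor
        · exact mul_nonneg ih.1 ha
        · calc P m 0 * a ≤ 1 * 1 := mul_le_mul ih.2 hale ha (by norm_num)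
            _ = 1 := by norm_num
    rw [Fintype.sum_unique]
    have hd0 : (default : ZMod 1) = 0 := Subsingleton.elim _ _
    erw [hd0]
    have := hPn n
    rw [Nat.cast_one, Real.one_rpow]
    rw [abs_of_nonpos (by norm_num; linarith [this.2])]
    norm_num
    nlinarith [this.1, this.2]
  · -- main case: p ≥ 3
    have hp3 : 3 ≤ p := by
      obtain ⟨k, hk⟩ := hp
      have h0 := NeZero.ne p
      omega
    haveI : Fact (1 < p) := ⟨by omega⟩
    have h10 : (1 : ZMod p) ≠ 0 := one_ne_zero
    have h20 : (2 : ZMod p) ≠ 0 := by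
      have : ((2:ℕ) : ZMod p) ≠ 0 := by
        rw [Ne, ZMod.natCast_eq_zero_iff]
        intro hdvd
        have := Nat.le_of_dvd (by norm_num) hdvd; omega
      simpa using this
    have hm10 : (-1 : ZMod p) ≠ 0 := by
      simpa [neg_eq_zero] using h10
    have h1m1 : (1 : ZMod p) ≠ -1 := by
      intro h; apply h20; linear_combination h
    have h0m1 : (0 : ZMod p) ≠ -1 := Ne.symm hm10
    have hm11 : (-1 : ZMod p) ≠ 1 := Ne.symm h1m1
    have hm20 : (-2 : ZMod p) ≠ 0 := by simpa [neg_eq_zero] using h20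
    have hm2m1 : (-2 : ZMod p) ≠ -1 := by
      intro h; apply h10; linear_combination -h
    -- kernel decomposition
    have hK : ∀ u : ZMod p, (if u = 1 then a else if u = 0 then (1:ℝ)/2
        else if u = -1 then c else 0)
        = (1/2) * Dker p a c u + (1/2) * Dker p a c (u - 1) := by
      intro u
      by_cases hu1 : u = 1
      · subst hu1
        simp [Dker, h10, h1m1, h0m1, sub_self]
      · by_cases hu0 : u = 0
        · subst hu0
          simp [Dker, h10, h0m1, hm10, zero_sub]
          linarith
        · by_cases hum : u = -1
          · subst hum
            simp [Dker, hm10, hm20, hm2m1, hm11, h0m1, show (-1 : ZMod p) - 1 = -2 by ring]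
          · have hu1' : u - 1 ≠ 0 := by rwa [sub_ne_zero]
            have hu1m : u - 1 ≠ -1 := by
              intro h; apply hu0; linear_combination h
            simp [Dker, hu1, hu0, hum, hu1', hu1m]
    -- B properties
    have hDnn : ∀ u : ZMod p, 0 ≤ Dker p a c u := by
      intro u; unfold Dker; split_ifs <;> linarith
    have hBnn : ∀ m (z : ZMod p), 0 ≤ Bker p a c m z := by
      intro m
      induction m with
      | zero => intro z; simp only [Bker]; split_ifs <;> norm_num
      | succ m ih =>
        intro z; simp only [Bker]
        exact Finset.sum_nonneg fun y _ => mul_nonneg (ih y) (hDnn _)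
    have hDsum : ∑ u : ZMod p, Dker p a c u = 1 := by
      unfold Dker
      rw [Finset.sum_add_distrib, Finset.sum_ite_eq', Finset.sum_ite_eq']
      simp only [Finset.mem_univ, if_true]
      linarith
    have hDsum' : ∀ w : ZMod p, ∑ u : ZMod p, Dker p a c (u - w) = 1 := by
      intro w; rw [← hDsum]
      exact Fintype.sum_equiv (Equiv.subRight w) _ _ (fun u => rfl)
    have hBsum : ∀ m, ∑ z : ZMod p, Bker p a c m z = 1 := by
      intro m
      induction m with
      | zero => simp [Bker]
      | succ m ih =>
        simp only [Bker]
        rw [Finset.sum_comm]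
        calc ∑ z : ZMod p, ∑ x : ZMod p, Bker p a c m z * Dker p a c (x - 2*z)
            = ∑ z : ZMod p, Bker p a c m z * ∑ x : ZMod p, Dker p a c (x - 2*z) := by
              simp [Finset.mul_sum]
          _ = ∑ z : ZMod p, Bker p a c m z := by
              refine Finset.sum_congr rfl fun z _ => ?_
              rw [hDsum' (2*z), mul_one]
          _ = 1 := ih
    have hBsum' : ∀ m (x : ZMod p), ∑ z : ZMod p, Bker p a c m (x - z) = 1 := by
      intro m x; rw [← hBsum m]
      exact Fintype.sum_equiv (Equiv.subLeft x) _ _ (fun z => rfl)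
    -- convolution step
    have conv1 : ∀ m (w v : ZMod p),
        ∑ y : ZMod p, Bker p a c m (y - v) * Dker p a c (w - 2*y)
          = Bker p a c (m+1) (w - 2*v) := by
      intro m w v
      show _ = ∑ z : ZMod p, Bker p a c m z * Dker p a c ((w - 2*v) - 2*z)
      refine (Fintype.sum_equiv (Equiv.addRight v) _ _ ?_).symm
      intro z
      simp only [Equiv.coe_addRight, add_sub_cancel_right]
      congr 2
      ring
    -- key identity
    have key : ∀ m (x : ZMod p), P m x
        = ((2:ℝ)^m)⁻¹ * ∑ j ∈ Finset.range (2^m), Bker p a c m (x - (j:ℕ)) := by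
      intro m
      induction m with
      | zero =>
        intro x
        rw [hP0]
        simp only [pow_zero, inv_one, one_mul, Finset.range_one, Finset.sum_singleton,
          Nat.cast_zero, sub_zero, Bker]
      | succ m ih =>
        intro x
        rw [hPs]
        have e1 : ∀ y : ZMod p, P m y * (if x - 2*y = 1 then a else if x - 2*y = 0 then (1:ℝ)/2
              else if x - 2*y = -1 then c else 0)
            = ((2:ℝ)^m)⁻¹ * ∑ j ∈ Finset.range (2^m), Bker p a c m (y - (j:ℕ)) *
                ((1/2) * Dker p a c (x - 2*y) + (1/2) * Dker p a c ((x-1) - 2*y)) := by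
          intro y
          rw [ih y, hK, mul_assoc, Finset.sum_mul]
          congr 1
          refine Finset.sum_congr rfl fun j _ => ?_
          rw [show x - 2*y - 1 = (x - 1) - 2*y by ring]
        rw [Finset.sum_congr rfl (fun y _ => e1 y), ← Finset.mul_sum, Finset.sum_comm]
        have e2 : ∀ j ∈ Finset.range (2^m), ∑ y : ZMod p, Bker p a c m (y - (j:ℕ)) *
              ((1/2) * Dker p a c (x - 2*y) + (1/2) * Dker p a c ((x-1) - 2*y))
            = (1/2) * Bker p a c (m+1) (x - 2*(j:ℕ)) + (1/2) * Bker p a c (m+1) ((x-1) - 2*(j:ℕ)) := by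
          intro j _
          rw [show (∑ y : ZMod p, Bker p a c m (y - (j:ℕ)) *
              ((1/2) * Dker p a c (x - 2*y) + (1/2) * Dker p a c ((x-1) - 2*y)))
            = (1/2) * ∑ y : ZMod p, Bker p a c m (y - (j:ℕ)) * Dker p a c (x - 2*y)
              + (1/2) * ∑ y : ZMod p, Bker p a c m (y - (j:ℕ)) * Dker p a c ((x-1) - 2*y) by
              rw [Finset.mul_sum, Finset.mul_sum, ← Finset.sum_add_distrib]
              exact Finset.sum_congr rfl fun y _ => by ring]
          rw [conv1 m x (j:ℕ), conv1 m (x-1) (j:ℕ)]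
        rw [Finset.sum_congr rfl e2]
        rw [show (2:ℕ)^(m+1) = 2 * 2^m by ring, sum_range_double]
        rw [Finset.mul_sum, Finset.mul_sum]
        refine Finset.sum_congr rfl fun j _ => ?_
        push_cast
        rw [show x - (2*(j:ZMod p) + 1) = (x - 1) - 2*(j:ZMod p) by ring]
        ring
    -- counting
    have hppos : 0 < p := Nat.pos_of_ne_zero (NeZero.ne p)
    have hpR : (0:ℝ) < p := by exact_mod_cast hppos
    have hM : (0:ℝ) < 2^n := by positivity
    set cnt : ZMod p → ℕ :=
      fun z => ((Finset.range (2^n)).filter (fun j => ((j:ℕ) : ZMod p) = z)).card with hcnt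
    have hBsum'' : ∀ m (w : ZMod p), ∑ s : ZMod p, Bker p a c m (s - w) = 1 := by
      intro m w; rw [← hBsum m]
      exact Fintype.sum_equiv (Equiv.subRight w) _ _ (fun s => rfl)
    have hfe : ∀ z : ZMod p, (Finset.range (2^n)).filter (fun j => ((j:ℕ):ZMod p) = z)
        = (Finset.range (2^n)).filter (fun j => j % p = z.val) := by
      intro z
      refine Finset.filter_congr fun j _ => ?_
      constructor
      · intro h; rw [← h, ZMod.val_natCast]
      · intro h
        have h2 : ((j : ℕ) : ZMod p) = ((z.val : ℕ) : ZMod p) := by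
          rw [← Nat.mod_add_div j p, h]
          push_cast [ZMod.natCast_self]
          ring
        rw [h2, ZMod.natCast_val, ZMod.cast_id]
    have hcnt' : ∀ z : ZMod p, cnt z = ((Finset.range (2^n)).filter (fun j => j % p = z.val)).card := by
      intro z; simp only [hcnt]; exact congrArg Finset.card (hfe z)
    have hAbound : ∀ z : ZMod p, |(cnt z : ℝ) / 2^n - 1/p| ≤ 1/2^n := by
      intro z
      obtain ⟨hb1, hb2⟩ := count_bounds p (2^n) z.val hppos (ZMod.val_lt z)
      have hc1 : (cnt z : ℝ) * p ≤ 2^n + p := by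
        rw [hcnt' z]; exact_mod_cast hb1
      have hc2 : (2:ℝ)^n ≤ (cnt z : ℝ) * p + p := by
        rw [hcnt' z]; exact_mod_cast hb2
      have hdiff : (cnt z : ℝ)/2^n - 1/p = ((cnt z : ℝ)*p - 2^n)/(2^n * p) := by
        field_simp <;> ring
      rw [hdiff, abs_div, abs_of_pos (mul_pos hM hpR)]
      have hnum : |(cnt z : ℝ)*p - 2^n| ≤ p := abs_le.2 ⟨by linarith, by linarith⟩
      calc |(cnt z : ℝ)*p - 2^n| / (2^n * p) ≤ (p:ℝ) / (2^n * p) := by gcongr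
        _ = 1/2^n := by field_simp <;> ring
    -- fiberwise decomposition
    have hPx : ∀ x : ZMod p, P n x - 1/p
        = ∑ z : ZMod p, ((cnt z : ℝ)/2^n - 1/p) * Bker p a c n (x - z) := by
      intro x
      have hfib : ∑ j ∈ Finset.range (2^n), Bker p a c n (x - (j:ℕ))
          = ∑ z : ZMod p, (cnt z : ℝ) * Bker p a c n (x - z) := by
        rw [← Finset.sum_fiberwise (Finset.range (2^n)) (fun j => ((j:ℕ) : ZMod p))
          (fun j => Bker p a c n (x - (j:ℕ)))]
        refine Finset.sum_congr rfl fun z _ => ?_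
        rw [Finset.sum_congr rfl (fun j hj => by
          rw [(Finset.mem_filter.1 hj).2] :
          ∀ j ∈ (Finset.range (2^n)).filter (fun j => ((j:ℕ):ZMod p) = z),
            Bker p a c n (x - (j:ℕ)) = Bker p a c n (x - z)),
          Finset.sum_const, nsmul_eq_mul]
      rw [key n x, hfib, Finset.mul_sum]
      have h1p : (1:ℝ)/p = ∑ z : ZMod p, (1/p) * Bker p a c n (x - z) := by
        rw [← Finset.mul_sum, hBsum' n x, mul_one]
      conv_lhs => rw [h1p]
      rw [← Finset.sum_sub_distrib]
      refine Finset.sum_congr rfl fun z _ => ?_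
      ring
    -- TV bound
    have hsum : ∑ s : ZMod p, |P n s - 1/p| ≤ (p:ℝ) * (1/2^n) := by
      calc ∑ s : ZMod p, |P n s - 1/p|
          ≤ ∑ s : ZMod p, ∑ z : ZMod p, |(cnt z : ℝ)/2^n - 1/p| * Bker p a c n (s - z) := by
            refine Finset.sum_le_sum fun s _ => ?_
            rw [hPx s]
            refine (Finset.abs_sum_le_sum_abs _ _).trans ?_
            refine Finset.sum_le_sum fun z _ => ?_
            rw [abs_mul, abs_of_nonneg (hBnn n _)]
        _ = ∑ z : ZMod p, |(cnt z : ℝ)/2^n - 1/p| * ∑ s : ZMod p, Bker p a c n (s - z) := by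
            rw [Finset.sum_comm]
            exact Finset.sum_congr rfl fun z _ => by rw [Finset.mul_sum]
        _ = ∑ z : ZMod p, |(cnt z : ℝ)/2^n - 1/p| := by
            refine Finset.sum_congr rfl fun z _ => ?_
            rw [hBsum'' n z, mul_one]
        _ ≤ ∑ _z : ZMod p, (1:ℝ)/2^n := Finset.sum_le_sum fun z _ => hAbound z
        _ = (p:ℝ) * (1/2^n) := by
            rw [Finset.sum_const, Finset.card_univ, ZMod.card, nsmul_eq_mul]
    -- numerics
    have hpow : (p:ℝ) ^ c₁ < 2^n := by
      have h1 : (p:ℝ) ^ c₁ = (2:ℝ) ^ (Real.logb 2 p * c₁) := by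
        rw [Real.rpow_mul (by norm_num : (0:ℝ) ≤ 2),
          Real.rpow_logb (by norm_num) (by norm_num) hpR]
      rw [h1, ← Real.rpow_natCast 2 n]
      exact Real.rpow_lt_rpow_of_exponent_lt (by norm_num) (by rw [mul_comm]; exact hn)
    have hpc : (0:ℝ) < (p:ℝ) ^ c₁ := Real.rpow_pos_of_pos hpR _
    have hfinal : (p:ℝ) / 2^n ≤ 1 / (p:ℝ) ^ (c₁ - 1) := by
      rw [Real.rpow_sub hpR, Real.rpow_one, one_div_div]
      gcongr
    have hmid : (1/2:ℝ) * ((p:ℝ) * (1/2^n)) ≤ (p:ℝ) / 2^n := by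
      have he : (1/2:ℝ) * ((p:ℝ) * (1/2^n)) = (p:ℝ)/(2*2^n) := by ring
      rw [he]
      gcongr
      linarith
    calc (1/2 : ℝ) * ∑ s : ZMod p, |P n s - 1/p| ≤ (1/2) * ((p:ℝ) * (1/2^n)) := by linarith
      _ ≤ (p:ℝ) / 2^n := hmid
      _ ≤ 1 / (p:ℝ) ^ (c₁ - 1) := hfinal
end

section
/- Let t >= 2, p = 2^t - 1, q = exp(2*pi*i/p), and for real a, b, c with a + b + c = 1 define Pi_j = prod_{alpha=0}^{t-1} (a * q^{2^alpha (2^j - 1)} + b + c * q^{-2^alpha (2^j - 1)}). Then for 0 <= j <= t, the complex conjugate of Pi_j equals Pi_{t-j}. -/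
/-!
Write `ζ = exp(2πi/p)` and `F e = a ζ^e + b + c ζ^(-e)`, so `Π_j = ∏_{α<t} F (2^α (2^j - 1))`.
Since `|ζ| = 1`, conjugation sends `F e` to `F (-e)`, and `F e` only depends on `e mod p`.
Modulo `p = 2^t - 1` we have `-2^α (2^j - 1) ≡ 2^(α+j) (2^(t-j) - 1)`, and `α ↦ F (2^α m)` has
period `t` because `2^t ≡ 1`; so the conjugate of `Π_j` is `Π_{t-j}` with its factors rotated by `j`.
-/

open Finset ComplexConjugate

theorem zpow_eq_zpow_of_modEq {G₀ : Type*} [GroupWithZero G₀] {x : G₀} {n : ℕ} (hx : x ^ n = 1)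
    {a b : ℤ} (h : a ≡ b [ZMOD n]) : x ^ a = x ^ b := by
  rcases eq_or_ne x 0 with rfl | hx0
  · obtain rfl : n = 0 := by
      by_contra hn
      simp [zero_pow hn] at hx
    simp only [Int.ModEq, Nat.cast_zero, Int.emod_zero] at h
    rw [h]
  · lift x to G₀ˣ using hx0.isUnit
    norm_cast at hx ⊢
    rw [zpow_eq_zpow_emod' a hx, zpow_eq_zpow_emod' b hx, h]

theorem Function.Periodic.prod_range_add_one {M : Type*} [CommMonoid M] {f : ℕ → M} {t : ℕ}
    (hf : Function.Periodic f t) : ∏ α ∈ range t, f (α + 1) = ∏ α ∈ range t, f α := by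
  cases t with
  | zero => simp
  | succ s => rw [prod_range_succ, prod_range_succ' f, ← hf 0, zero_add]

theorem Function.Periodic.prod_range_add {M : Type*} [CommMonoid M] {f : ℕ → M} {t : ℕ}
    (hf : Function.Periodic f t) (j : ℕ) : ∏ α ∈ range t, f (α + j) = ∏ α ∈ range t, f α := by
  induction j with
  | zero => rfl
  | succ j ih =>
    rw [← ih, ← (hf.add_const j).prod_range_add_one]
    simp only [add_right_comm _ 1 j, add_assoc]

theorem two_pow_add_mul_modEq (t α : ℕ) (m : ℤ) :
    2 ^ (α + t) * m ≡ 2 ^ α * m [ZMOD 2 ^ t - 1] :=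
  Int.modEq_iff_dvd.mpr ⟨-(2 ^ α * m), by ring⟩

theorem neg_two_pow_mul_modEq {t j : ℕ} (hj : j ≤ t) (α : ℕ) :
    -(2 ^ α * (2 ^ j - 1)) ≡ 2 ^ (α + j) * (2 ^ (t - j) - 1) [ZMOD 2 ^ t - 1] := by
  obtain ⟨k, rfl⟩ := Nat.exists_eq_add_of_le hj
  exact Int.modEq_iff_dvd.mpr ⟨2 ^ α, by rw [Nat.add_sub_cancel_left]; ring⟩

section Trinomial

variable (a b c : ℝ) {ζ : ℂ}

theorem conj_trinomial_zpow (hζ : ‖ζ‖ = 1) (e : ℤ) :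
    conj (a * ζ ^ e + b + c * ζ ^ (-e)) = a * ζ ^ (-e) + b + c * ζ ^ (-(-e)) := by
  simp only [map_add, map_mul, Complex.conj_ofReal, map_zpow₀, ← Complex.inv_eq_conj hζ,
    inv_zpow', neg_neg]

theorem trinomial_zpow_congr {n : ℕ} (hζ : ζ ^ n = 1) {e e' : ℤ} (h : e ≡ e' [ZMOD n]) :
    a * ζ ^ e + b + c * ζ ^ (-e) = a * ζ ^ e' + b + c * ζ ^ (-e') := by
  rw [zpow_eq_zpow_of_modEq hζ h, zpow_eq_zpow_of_modEq hζ h.neg]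

end Trinomial

theorem conj_Pi_eq_Pi_sub_general (t : ℕ) (p : ℕ) (hp : p = 2^t - 1)
    (a b c : ℝ) (j : ℕ) (hj : j ≤ t) :
    (starRingEnd ℂ) (∏ α ∈ Finset.range t,
        ((a : ℂ) * Complex.exp (2 * Real.pi * Complex.I / p) ^ ((2^α * (2^j - 1) : ℕ))
          + b + c * Complex.exp (2 * Real.pi * Complex.I / p) ^ (-((2:ℤ)^α * (2^j - 1))))) =
      ∏ α ∈ Finset.range t,
        ((a : ℂ) * Complex.exp (2 * Real.pi * Complex.I / p) ^ ((2^α * (2^(t-j) - 1) : ℕ))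
          + b + c * Complex.exp (2 * Real.pi * Complex.I / p) ^ (-((2:ℤ)^α * (2^(t-j) - 1)))) := by
  set ζ := Complex.exp (2 * Real.pi * Complex.I / p)
  have hζ_norm : ‖ζ‖ = 1 := by simp [ζ, Complex.norm_exp]
  have hζ_pow : ζ ^ (2 ^ t - 1 : ℕ) = 1 := by
    rcases eq_or_ne p 0 with hp0 | hp0
    · rw [← hp, hp0, pow_zero]
    · exact hp ▸ (Complex.isPrimitiveRoot_exp p hp0).pow_eq_one
  set F : ℤ → ℂ := fun e ↦ a * ζ ^ e + b + c * ζ ^ (-e)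
  have hF_congr {e e' : ℤ} (h : e ≡ e' [ZMOD 2 ^ t - 1]) : F e = F e' :=
    trinomial_zpow_congr a b c hζ_pow (by push_cast [Nat.one_le_two_pow]; exact h)
  have hPi (k α : ℕ) : (a : ℂ) * ζ ^ ((2^α * (2^k - 1) : ℕ)) + b + c * ζ ^ (-((2:ℤ)^α * (2^k - 1)))
      = F (2 ^ α * (2 ^ k - 1)) := by
    rw [← zpow_natCast, Nat.cast_mul, Nat.cast_sub Nat.one_le_two_pow]
    push_cast
    rfl
  simp only [hPi, map_prod]
  calc ∏ α ∈ range t, conj (F (2 ^ α * (2 ^ j - 1)))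
      = ∏ α ∈ range t, F (2 ^ (α + j) * (2 ^ (t - j) - 1)) := prod_congr rfl fun α _ ↦
        (conj_trinomial_zpow a b c hζ_norm _).trans (hF_congr (neg_two_pow_mul_modEq hj α))
    _ = ∏ α ∈ range t, F (2 ^ α * (2 ^ (t - j) - 1)) :=
        Function.Periodic.prod_range_add (f := fun α ↦ F (2 ^ α * (2 ^ (t - j) - 1)))
          (fun α ↦ hF_congr (two_pow_add_mul_modEq t α _)) j

/-- with `p = 2^t - 1`, `q = exp(2πi/p)` and
`Π_j = ∏_{α=0}^{t-1} (a q^{2^α(2^j-1)} + b + c q^{-2^α(2^j-1)})`,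
the complex conjugate of `Π_j` equals `Π_{t-j}` for `0 ≤ j ≤ t`. -/
theorem conj_Pi_eq_Pi_sub (t : ℕ) (ht : 2 ≤ t) (p : ℕ) (hp : p = 2^t - 1)
    (a b c : ℝ) (habc : a + b + c = 1) (j : ℕ) (hj : j ≤ t) :
    (starRingEnd ℂ) (∏ α ∈ Finset.range t,
        ((a : ℂ) * Complex.exp (2 * Real.pi * Complex.I / p) ^ ((2^α * (2^j - 1) : ℕ))
          + b + c * Complex.exp (2 * Real.pi * Complex.I / p) ^ (-((2:ℤ)^α * (2^j - 1))))) =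
      ∏ α ∈ Finset.range t,
        ((a : ℂ) * Complex.exp (2 * Real.pi * Complex.I / p) ^ ((2^α * (2^(t-j) - 1) : ℕ))
          + b + c * Complex.exp (2 * Real.pi * Complex.I / p) ^ (-((2:ℤ)^α * (2^(t-j) - 1)))) :=
  conj_Pi_eq_Pi_sub_general t p hp a b c j hj
end

section
/- Let P_n be the distribution of X_n where X_0 = 0, X_{n+1} = 2 X_n + b_n mod p, p = 2^t - 1, b_n i.i.d. with P(b_n=1)=a, P(b_n=0)=b, P(b_n=-1)=c, and let f(k) = sum_{j=0}^{t-1} q^{k 2^j} with q = exp(2 pi i/p). If n = r t, then E_{P_n}(f) = t * Pi_1^r, where Pi_1 = prod_{alpha=0}^{t-1} (a q^{2^alpha} + b + c q^{-2^alpha}). -/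
/-!
Let `F_n(m) = ∑ₖ P_n(k) ψ(m k)` be the Fourier transform of `P_n` for the additive character
`ψ(x) = q^x` of `ZMod p`. Since `X_{n+1} = 2 X_n + b_n`, one step multiplies it by the transform
of the step law and doubles the frequency: `F_{n+1}(m) = Ŵ(m) F_n(2m)` with
`Ŵ(m) = a q^m + b + c q^{-m}`. As `2^t = 1` in `ZMod p`, after `t` steps the frequency returns,
so `F_{rt}(m) = (∏_{α<t} Ŵ(2^α m))^r`, and this product is invariant under `m ↦ 2m`. Hence each
of the `t` terms `F_{rt}(2^j)` of `E(f)` equals `Π₁^r`.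
-/

open Finset

section CharTransform

variable {A R : Type*} [CommRing A] [Fintype A] [CommRing R]

def charTransform (ψ : AddChar A R) (f : A → R) (m : A) : R :=
  ∑ k, f k * ψ (m * k)

variable (ψ : AddChar A R)

lemma charTransform_delta_zero [DecidableEq A] (m : A) :
    charTransform ψ (fun x => if x = 0 then 1 else 0) m = 1 := by
  simp [charTransform]

lemma charTransform_of_eq_sum_mul_sub {f g w : A → R} {u : A}
    (hg : ∀ x, g x = ∑ y, f y * w (x - u * y)) (m : A) :
    charTransform ψ g m = charTransform ψ w m * charTransform ψ f (u * m) := by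
  have hshift : ∀ y, ∑ x, w (x - u * y) * ψ (m * x) = charTransform ψ w m * ψ (u * m * y) :=
    fun y => by
      rw [charTransform, sum_mul]
      refine (Fintype.sum_equiv (Equiv.addRight (u * y)) _ _ fun z => ?_).symm
      rw [Equiv.coe_addRight, add_sub_cancel_right, mul_add, AddChar.map_add_eq_mul]
      ring_nf
  calc charTransform ψ g m
      = ∑ y, f y * ∑ x, w (x - u * y) * ψ (m * x) := by
        simp only [charTransform, hg, sum_mul, mul_sum, mul_assoc]
        exact sum_comm
    _ = charTransform ψ w m * charTransform ψ f (u * m) := by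
        simp only [hshift, charTransform, mul_sum]
        exact sum_congr rfl fun y _ => by ring

variable {P : ℕ → A → R} {w : A → R} {u : A}

lemma charTransform_add_steps (hP : ∀ n x, P (n + 1) x = ∑ y, P n y * w (x - u * y))
    (n s : ℕ) (m : A) :
    charTransform ψ (P (n + s)) m =
      (∏ i ∈ range s, charTransform ψ w (u ^ i * m)) * charTransform ψ (P n) (u ^ s * m) := by
  induction s generalizing m with
  | zero => simp
  | succ s ih =>
    rw [← add_assoc, charTransform_of_eq_sum_mul_sub ψ (hP _), ih, prod_range_succ']
    simp only [pow_succ, mul_assoc, pow_zero, one_mul]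
    ring

lemma charTransform_mul_period [DecidableEq A]
    (hP : ∀ n x, P (n + 1) x = ∑ y, P n y * w (x - u * y))
    (hP0 : ∀ x, P 0 x = if x = 0 then 1 else 0) {t : ℕ} (hu : u ^ t = 1) (r : ℕ) (m : A) :
    charTransform ψ (P (r * t)) m = (∏ i ∈ range t, charTransform ψ w (u ^ i * m)) ^ r := by
  induction r with
  | zero => rw [zero_mul, funext hP0, charTransform_delta_zero, pow_zero]
  | succ r ih => rw [add_mul, one_mul, charTransform_add_steps ψ hP, hu, one_mul, ih, pow_succ']

end CharTransform

lemma prod_range_mul_pow_eq_of_pow_eq_one {A M : Type*} [CommMonoid A] [CommMonoid M]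
    (h : A → M) {u : A} {t : ℕ} (hu : u ^ t = 1) (j : ℕ) (m : A) :
    ∏ i ∈ range t, h (u ^ i * (u ^ j * m)) = ∏ i ∈ range t, h (u ^ i * m) := by
  have step : ∀ m, ∏ i ∈ range t, h (u ^ i * (u * m)) = ∏ i ∈ range t, h (u ^ i * m) := by
    intro m
    rcases t with _ | t
    · simp
    rw [prod_range_succ (fun i => h (u ^ i * (u * m))), prod_range_succ' (fun i => h (u ^ i * m))]
    simp only [← mul_assoc, ← pow_succ, hu, one_mul, pow_zero]
  induction j with
  | zero => simp
  | succ j ih => rw [pow_succ', mul_assoc, step, ih]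

lemma charTransform_threePoint {A R : Type*} [CommRing A] [Fintype A] [DecidableEq A]
    [CommRing R] (ψ : AddChar A R) (h2 : (2 : A) ≠ 0) (a b c : R) (m : A) :
    charTransform ψ (fun x => if x = 1 then a else if x = 0 then b else if x = -1 then c else 0) m
      = a * ψ m + b + c * ψ (-m) := by
  have h10 : (1 : A) ≠ 0 := fun h => h2 (by linear_combination 2 * h)
  have h1m1 : (1 : A) ≠ -1 := fun h => h2 (by linear_combination h)
  have h0m1 : (0 : A) ≠ -1 := fun h => h10 (by linear_combination h)
  have hsplit : ∀ x : A,
      (if x = 1 then a else if x = 0 then b else if x = -1 then c else 0) * ψ (m * x)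
        = (if x = 1 then a * ψ m else 0) + (if x = 0 then b else 0)
          + (if x = -1 then c * ψ (-m) else 0) := by
    intro x
    by_cases hx1 : x = 1 <;> by_cases hx0 : x = 0 <;> by_cases hxm1 : x = -1 <;>
      simp_all
  simp only [charTransform, hsplit, sum_add_distrib, sum_ite_eq', mem_univ, if_true]

lemma ZMod.two_pow_eq_one {t p : ℕ} (hp : p = 2 ^ t - 1) : (2 : ZMod p) ^ t = 1 := by
  have h : 2 ^ t = p + 1 := by have := Nat.one_le_two_pow (n := t); omega
  simpa using congrArg (Nat.cast : ℕ → ZMod p) h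

lemma ZMod.two_ne_zero_of_three_le {p : ℕ} (hp : 3 ≤ p) : (2 : ZMod p) ≠ 0 := by
  intro h
  have hdvd := (ZMod.natCast_eq_zero_iff 2 p).1 (by exact_mod_cast h)
  exact absurd (Nat.le_of_dvd two_pos hdvd) (by omega)

lemma AddChar.zmodChar_natCast_mul {C : Type*} [CommMonoid C] {n : ℕ} [NeZero n] {ζ : C}
    (hζ : ζ ^ n = 1) (m : ℕ) (k : ZMod n) : zmodChar n hζ (m * k) = ζ ^ (k.val * m) := by
  rw [show (m : ZMod n) * k = ((k.val * m : ℕ) : ZMod n) by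
    push_cast [ZMod.natCast_zmod_val]; ring, zmodChar_apply']

lemma AddChar.zmodChar_neg_natCast {C : Type*} [DivisionCommMonoid C] {n : ℕ} [NeZero n] {ζ : C}
    (hζ : ζ ^ n = 1) (m : ℕ) : zmodChar n hζ (-(m : ZMod n)) = ζ ^ (-(m : ℤ)) := by
  rw [map_neg_eq_inv, zmodChar_apply', zpow_neg, zpow_natCast]

theorem expectation_separating_function_general (t : ℕ) (ht : 2 ≤ t) (p : ℕ) [NeZero p]
    (hp : p = 2^t - 1) (a b c : ℝ) (P : ℕ → ZMod p → ℝ)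
    (hP0 : ∀ x, P 0 x = if x = 0 then 1 else 0)
    (hPs : ∀ n x, P (n+1) x = ∑ y : ZMod p, P n y *
      (if x - 2*y = 1 then a else if x - 2*y = 0 then b
        else if x - 2*y = -1 then c else 0))
    (r n : ℕ) (hn : n = r * t) :
    ∑ k : ZMod p, (P n k : ℂ) *
        (∑ j ∈ Finset.range t, Complex.exp (2 * Real.pi * Complex.I / p) ^ (k.val * 2^j))
      = t * (∏ α ∈ Finset.range t,
          ((a : ℂ) * Complex.exp (2 * Real.pi * Complex.I / p) ^ ((2^α : ℕ)) + b
            + c * Complex.exp (2 * Real.pi * Complex.I / p) ^ (-((2:ℤ)^α)))) ^ r := by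
  subst hn
  set q := Complex.exp (2 * Real.pi * Complex.I / p)
  have hq : q ^ p = 1 := (Complex.isPrimitiveRoot_exp p (NeZero.ne p)).pow_eq_one
  set ψ := AddChar.zmodChar p hq
  have h2t : (2 : ZMod p) ^ t = 1 := ZMod.two_pow_eq_one hp
  have h2 : (2 : ZMod p) ≠ 0 :=
    ZMod.two_ne_zero_of_three_le (by have := Nat.pow_le_pow_right two_pos ht; omega)
  set w : ZMod p → ℂ := fun x =>
    if x = 1 then (a : ℂ) else if x = 0 then (b : ℂ) else if x = -1 then (c : ℂ) else 0
  set P' : ℕ → ZMod p → ℂ := fun n k => P n k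
  have hP' (n : ℕ) (x : ZMod p) : P' (n + 1) x = ∑ y, P' n y * w (x - 2 * y) := by
    simp only [P', w, hPs]
    push_cast [apply_ite (fun x : ℝ => (x : ℂ))]
    rfl
  have hP0' (x : ZMod p) : P' 0 x = if x = 0 then 1 else 0 := by
    simp [P', hP0, apply_ite]
  have hchar (k : ZMod p) (j : ℕ) : q ^ (k.val * 2 ^ j) = ψ (2 ^ j * k) := by
    rw [← AddChar.zmodChar_natCast_mul hq, Nat.cast_pow, Nat.cast_ofNat]
  have hfactor (α : ℕ) : charTransform ψ w (2 ^ α)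
      = a * q ^ (2 ^ α : ℕ) + b + c * q ^ (-((2 : ℤ) ^ α)) := by
    rw [charTransform_threePoint ψ h2, show (2 : ZMod p) ^ α = ((2 ^ α : ℕ) : ZMod p) by simp,
      AddChar.zmodChar_apply', AddChar.zmodChar_neg_natCast, Nat.cast_pow, Nat.cast_ofNat]
  calc ∑ k, (P (r * t) k : ℂ) * ∑ j ∈ range t, q ^ (k.val * 2 ^ j)
      = ∑ j ∈ range t, charTransform ψ (P' (r * t)) (2 ^ j) := by
        simp only [charTransform, mul_sum, hchar, P']
        exact sum_comm
    _ = ∑ j ∈ range t, (∏ α ∈ range t, charTransform ψ w (2 ^ α)) ^ r := by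
        refine sum_congr rfl fun j _ => ?_
        have hinv := prod_range_mul_pow_eq_of_pow_eq_one (charTransform ψ w) h2t j 1
        simp only [mul_one] at hinv
        rw [charTransform_mul_period ψ hP' hP0' h2t, hinv]
    _ = _ := by simp only [hfactor, sum_const, card_range, nsmul_eq_mul]

/-- with `p = 2^t - 1`, `q = exp(2πi/p)`, `f(k) = ∑_{j<t} q^{k 2^j}` and
`P_n` the distribution of `X_n` (`X_0 = 0`, `X_{n+1} = 2X_n + b_n mod p`, with
`P(b_n=1)=a`, `P(b_n=0)=b`, `P(b_n=-1)=c`), if `n = r t` then `E_{P_n}(f) = t Π₁^r`,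
where `Π₁ = ∏_{α<t} (a q^{2^α} + b + c q^{-2^α})`. -/
theorem expectation_separating_function (t : ℕ) (ht : 2 ≤ t) (p : ℕ) [NeZero p]
    (hp : p = 2^t - 1) (a b c : ℝ) (ha : 0 ≤ a) (hb : 0 ≤ b) (hc : 0 ≤ c)
    (habc : a + b + c = 1) (P : ℕ → ZMod p → ℝ)
    (hP0 : ∀ x, P 0 x = if x = 0 then 1 else 0)
    (hPs : ∀ n x, P (n+1) x = ∑ y : ZMod p, P n y *
      (if x - 2*y = 1 then a else if x - 2*y = 0 then b
        else if x - 2*y = -1 then c else 0))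
    (r n : ℕ) (hn : n = r * t) :
    ∑ k : ZMod p, (P n k : ℂ) *
        (∑ j ∈ Finset.range t, Complex.exp (2 * Real.pi * Complex.I / p) ^ (k.val * 2^j))
      = t * (∏ α ∈ Finset.range t,
          ((a : ℂ) * Complex.exp (2 * Real.pi * Complex.I / p) ^ ((2^α : ℕ)) + b
            + c * Complex.exp (2 * Real.pi * Complex.I / p) ^ (-((2:ℤ)^α)))) ^ r :=
  expectation_separating_function_general t ht p hp a b c P hP0 hPs r n hn
end

section
/- Let m_beta = liminf_{t -> infinity} |Pi_1| where Pi_1 = prod_{alpha=0}^{t-1} ((1 - 2 beta) + 2 beta cos(2 pi 2^alpha / (2^t - 1))) for 0 < beta < 1/4. Then lim_{beta -> 0+} m_beta = 1. -/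
/-!
Writing each factor as `1 - 2β (1 - cos θ_α)` with `θ_α = 2π 2^α / (2^t - 1)`, every factor lies
in `[0, 1]` when `β ≤ 1/4`, so `Π₁ ≤ 1`. Conversely `∏ (1 - x_α) ≥ 1 - ∑ x_α` and
`1 - cos θ ≤ θ² / 2`, while `∑_{α<t} 4^α ≤ (2^t - 1)²`, so `Π₁ ≥ 1 - 4π² β` uniformly in `t`.
Hence `1 - 4π² β ≤ m_β ≤ 1`.
-/

open Filter Finset Real Topology

theorem Finset.one_sub_sum_le_prod_one_sub {ι R : Type*} [LinearOrder ι] [CommRing R]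
    [PartialOrder R] [IsOrderedRing R] (s : Finset ι) (f : ι → R)
    (h0 : ∀ i ∈ s, 0 ≤ f i) (h1 : ∀ i ∈ s, f i ≤ 1) :
    1 - ∑ i ∈ s, f i ≤ ∏ i ∈ s, (1 - f i) := by
  rw [prod_one_sub_ordered]
  gcongr with i hi
  have hprod : ∏ j ∈ s with j < i, (1 - f j) ≤ 1 :=
    prod_le_one (fun j hj => sub_nonneg.2 (h1 j (mem_filter.1 hj).1))
      (fun j hj => sub_le_self _ (h0 j (mem_filter.1 hj).1))
  exact mul_le_of_le_one_right (h0 i hi) hprod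

theorem sum_sq_two_pow_le (t : ℕ) : ∑ α ∈ range t, ((2 : ℝ) ^ α) ^ 2 ≤ ((2 : ℝ) ^ t - 1) ^ 2 := by
  induction t with
  | zero => simp
  | succ t ih =>
    have h1 : (1 : ℝ) ≤ 2 ^ t := one_le_pow₀ one_le_two
    rw [sum_range_succ, pow_succ (2 : ℝ) t]
    nlinarith

theorem sum_one_sub_cos_le (t : ℕ) :
    ∑ α ∈ range t, (1 - cos (2 * π * 2 ^ α / ((2 : ℝ) ^ t - 1))) ≤ 2 * π ^ 2 := by
  calc ∑ α ∈ range t, (1 - cos (2 * π * 2 ^ α / ((2 : ℝ) ^ t - 1)))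
      ≤ ∑ α ∈ range t, (2 * π * 2 ^ α / ((2 : ℝ) ^ t - 1)) ^ 2 / 2 :=
        sum_le_sum fun α _ => by
          linarith [one_sub_sq_div_two_le_cos (x := 2 * π * 2 ^ α / ((2 : ℝ) ^ t - 1))]
    _ = 2 * π ^ 2 * ((∑ α ∈ range t, ((2 : ℝ) ^ α) ^ 2) / ((2 : ℝ) ^ t - 1) ^ 2) := by
        rw [sum_div, mul_sum]
        refine sum_congr rfl fun α _ => ?_
        rw [div_pow, mul_pow, mul_pow]
        ring
    _ ≤ 2 * π ^ 2 * 1 := by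
        gcongr
        exact div_le_one_of_le₀ (sum_sq_two_pow_le t) (sq_nonneg _)
    _ = 2 * π ^ 2 := mul_one _

theorem Filter.liminf_mem_Icc_of_forall_mem_Icc {ι α : Type*} [ConditionallyCompleteLinearOrder α]
    {f : Filter ι} [f.NeBot] {u : ι → α} {a b : α} (h : ∀ i, u i ∈ Set.Icc a b) :
    liminf u f ∈ Set.Icc a b :=
  ⟨le_liminf_of_le (isCoboundedUnder_ge_of_le f fun i => (h i).2) (.of_forall fun i => (h i).1),
    liminf_le_of_frequently_le (.of_forall fun i => (h i).2)
      (isBoundedUnder_of_eventually_ge (.of_forall fun i => (h i).1))⟩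

noncomputable def piOne (β : ℝ) (t : ℕ) : ℝ :=
  ∏ α ∈ range t, ((1 - 2 * β) + 2 * β * cos (2 * π * 2 ^ α / ((2 : ℝ) ^ t - 1)))

theorem piOne_mem_Icc {β : ℝ} (hβ : β ∈ Set.Icc 0 (1 / 4)) (t : ℕ) :
    piOne β t ∈ Set.Icc (1 - 4 * π ^ 2 * β) 1 := by
  set θ : ℕ → ℝ := fun α => 2 * π * 2 ^ α / ((2 : ℝ) ^ t - 1)
  have hfactor : ∀ α ∈ range t,
      (1 - 2 * β) + 2 * β * cos (θ α) = 1 - 2 * β * (1 - cos (θ α)) := fun α _ => by ring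
  have h0 : ∀ x, 0 ≤ 2 * β * (1 - cos x) := fun x =>
    mul_nonneg (by linarith [hβ.1]) (sub_nonneg.2 (cos_le_one x))
  have h1 : ∀ x, 2 * β * (1 - cos x) ≤ 1 := fun x => by nlinarith [neg_one_le_cos x, hβ.1, hβ.2]
  rw [piOne, prod_congr rfl hfactor]
  constructor
  · calc 1 - 4 * π ^ 2 * β = 1 - 2 * β * (2 * π ^ 2) := by ring
      _ ≤ 1 - ∑ α ∈ range t, 2 * β * (1 - cos (θ α)) := by
          rw [← mul_sum]
          gcongr
          · linarith [hβ.1]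
          · exact sum_one_sub_cos_le t
      _ ≤ _ := one_sub_sum_le_prod_one_sub _ _ (fun α _ => h0 _) (fun α _ => h1 _)
  · exact prod_le_one (fun α _ => sub_nonneg.2 (h1 _)) (fun α _ => sub_le_self _ (h0 _))

/-- with `m_β = liminf_{t→∞} |Π₁|` where
`Π₁ = ∏_{α<t} ((1-2β) + 2β cos(2π 2^α/(2^t-1)))` for `0 < β < 1/4`,
one has `m_β → 1` as `β → 0⁺`. -/
theorem liminf_Pi_one_tendsto_one :
    Filter.Tendsto (fun β : ℝ => Filter.liminf (fun t : ℕ =>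
        ∏ α ∈ Finset.range t,
          ((1 - 2*β) + 2*β * Real.cos (2 * Real.pi * 2^α / ((2:ℝ)^t - 1)))) Filter.atTop)
      (nhdsWithin 0 (Set.Ioo (0:ℝ) (1/4))) (nhds 1) := by
  change Tendsto (fun β => liminf (piOne β) atTop) _ _
  have hbounds : ∀ β ∈ Set.Ioo (0 : ℝ) (1 / 4),
      liminf (piOne β) atTop ∈ Set.Icc (1 - 4 * π ^ 2 * β) 1 :=
    fun β hβ => liminf_mem_Icc_of_forall_mem_Icc (piOne_mem_Icc (Set.Ioo_subset_Icc_self hβ))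
  have hlower : Tendsto (fun β : ℝ => 1 - 4 * π ^ 2 * β) (𝓝[Set.Ioo 0 (1 / 4)] 0) (𝓝 1) := by
    have hcont : Continuous fun β : ℝ => 1 - 4 * π ^ 2 * β := by fun_prop
    simpa using tendsto_nhdsWithin_of_tendsto_nhds (hcont.tendsto 0)
  exact tendsto_of_tendsto_of_tendsto_of_le_of_le' hlower tendsto_const_nhds
    (eventually_nhdsWithin_of_forall fun β hβ => (hbounds β hβ).1)
    (eventually_nhdsWithin_of_forall fun β hβ => (hbounds β hβ).2)
end
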